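/- arXiv:1411.1789 — 8 statements merged into one kernel-verified Lean document; each statement's English description precedes it below -/
import Mathlib

section
/- Let p be a prime, K a finite extension of ℚ_p, and a, b ∈ K^× such that the quaternion algebra D = (a,b/K) is a division ring. Then the Lie algebra sl_1(D) of trace-zero elements of D with the commutator bracket is not isomorphic, as a Lie algebra over K, to the Lie algebra sl_2(K) of trace-zero 2×2 matrices over K with the commutator bracket. -/
open Quaternion

attribute [local instance 100] LieRing.ofAssociativeRing

/-- The trace-zero elements of the quaternion algebra `ℍ[K,a,b]` (the elements `x` with
`x̄ = -x`, i.e. `x.re = 0`), as a Lie subalgebra for the commutator bracket, over a base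
ring `S`. -/
def sl1 (S : Type) (K : Type) [CommRing S] [Field K] [Algebra S K] (a b : K) :
    LieSubalgebra S ℍ[K, a, b] where
  carrier := {x | x.re = 0}
  add_mem' {x y} hx hy := by
    simp only [Set.mem_setOf_eq] at *
    simp [hx, hy]
  zero_mem' := by simp [Set.mem_setOf_eq]
  smul_mem' s x hx := by
    simp only [Set.mem_setOf_eq] at *
    simp [QuaternionAlgebra.re_smul, hx]
  lie_mem' {x y} hx hy := by
    simp only [Set.mem_setOf_eq] at *
    simp only [Ring.lie_def, QuaternionAlgebra.re_sub, QuaternionAlgebra.re_mul]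
    ring

/-! A nonzero `u ∈ sl₁(D)` squares to a scalar `s`, nonzero because `u` is invertible in `D`, so
`(ad u)³ = 4s • ad u` and, as `K` has characteristic zero, `⁅u, ⁅u, ⁅u, v⁆⁆⁆ = 0` forces
`⁅u, v⁆ = 0`. In `sl₂(K)` the nilpotent `e = E₀₁` violates this: `(ad e)³ f = 0` for `f = E₁₀`, while `⁅e, f⁆ = E₀₀ - E₁₁ ≠ 0`. -/

theorem lie_lie_lie_eq_smul_of_mul_self_eq_algebraMap {R A : Type*} [CommRing R] [Ring A]
    [Algebra R A] {u : A} {s : R} (hu : u * u = algebraMap R A s) (v : A) :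
    ⁅u, ⁅u, ⁅u, v⁆⁆⁆ = (4 * s) • ⁅u, v⁆ := by
  have hu_left (w : A) : u * (u * w) = s • w := by
    rw [← mul_assoc, hu, Algebra.smul_def]
  have hu_right (w : A) : w * (u * u) = s • w := by
    rw [hu, ← Algebra.commutes, ← Algebra.smul_def]
  simp only [Ring.lie_def, mul_sub, sub_mul, mul_assoc, hu_left, hu_right, mul_smul_comm,
    smul_mul_assoc]
  module

theorem QuaternionAlgebra.mul_self_eq_coe_of_re_eq_zero {R : Type*} [CommRing R] {c₁ c₃ : R}
    {u : ℍ[R,c₁,0,c₃]} (hu : u.re = 0) : u * u = ↑(-(star u * u).re) := by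
  have hstar : star u = -u := by ext <;> simp [hu]
  rw [QuaternionAlgebra.coe_neg, ← QuaternionAlgebra.star_mul_eq_coe, hstar, neg_mul, neg_neg]

theorem LieAlgebra.SpecialLinear.exists_fin_two_lie_lie_lie_eq_zero_and_lie_ne_zero
    (R : Type*) [CommRing R] [Nontrivial R] :
    ∃ x y : sl (Fin 2) R, ⁅x, ⁅x, ⁅x, y⁆⁆⁆ = 0 ∧ ⁅x, y⁆ ≠ 0 := by
  refine ⟨single 0 1 (by decide) 1, single 1 0 (by decide) 1, ?_, fun h => ?_⟩
  · ext i j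
    fin_cases i <;> fin_cases j <;>
      simp [Ring.lie_def, Matrix.mul_apply, Matrix.single, Fin.sum_univ_two]
  · have h00 := congrArg (fun z : sl (Fin 2) R => z.val 0 0) h
    simp [Ring.lie_def, Matrix.mul_apply, Matrix.single] at h00

theorem sl1.lie_eq_zero_of_lie_lie_lie_eq_zero {K : Type} [Field K] {a b : K} (h2 : (2 : K) ≠ 0)
    (hdiv : ∀ x : ℍ[K, a, b], x ≠ 0 → IsUnit x) {x y : sl1 K K a b}
    (h : ⁅x, ⁅x, ⁅x, y⁆⁆⁆ = 0) : ⁅x, y⁆ = 0 := by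
  obtain hx | hx := eq_or_ne (x : ℍ[K, a, b]) 0
  · obtain rfl : x = 0 := Subtype.ext hx
    simp
  have hsq := QuaternionAlgebra.mul_self_eq_coe_of_re_eq_zero
    (show (x : ℍ[K, a, b]).re = 0 from x.2)
  set s := -(star (x : ℍ[K, a, b]) * x).re
  have hs : s ≠ 0 := by
    intro hs
    rw [hs, QuaternionAlgebra.coe_zero] at hsq
    exact hx ((hdiv _ hx).mul_right_eq_zero.mp hsq)
  have h4s : 4 * s ≠ 0 := by
    rw [show (4 : K) = 2 * 2 by norm_num]
    exact mul_ne_zero (mul_ne_zero h2 h2) hs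
  have hsmul : (4 * s) • ⁅(x : ℍ[K, a, b]), (y : ℍ[K, a, b])⁆ = 0 := by
    rw [← lie_lie_lie_eq_smul_of_mul_self_eq_algebraMap
      (by rwa [QuaternionAlgebra.algebraMap_eq])]
    exact congrArg Subtype.val h
  exact Subtype.ext ((smul_eq_zero.mp hsmul).resolve_left h4s)

theorem stmt8_general (p : ℕ) [Fact p.Prime] (K : Type) [Field K] [Algebra ℚ_[p] K] (a b : K)
    (hdiv : ∀ x : ℍ[K, a, b], x ≠ 0 → IsUnit x) :
    IsEmpty ((sl1 K K a b) ≃ₗ⁅K⁆ (LieAlgebra.SpecialLinear.sl (Fin 2) K)) := by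
  have : CharZero K := charZero_of_injective_algebraMap (algebraMap ℚ_[p] K).injective
  refine ⟨fun φ => ?_⟩
  obtain ⟨e, f, hnil, hef⟩ :=
    LieAlgebra.SpecialLinear.exists_fin_two_lie_lie_lie_eq_zero_and_lie_ne_zero K
  have hpullback : ⁅φ.symm e, φ.symm f⁆ = 0 :=
    sl1.lie_eq_zero_of_lie_lie_lie_eq_zero two_ne_zero hdiv
      (by simp only [← LieEquiv.map_lie, hnil, map_zero])
  apply hef
  simpa only [LieEquiv.map_lie, LieEquiv.apply_symm_apply, map_zero] using congrArg φ hpullback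

/-- If `D = (a,b/K)` is a quaternion *division* algebra over a finite
extension `K` of `ℚ_p`, then the Lie algebra `sl₁(D)` of trace-zero quaternions is not
isomorphic over `K` to `sl₂(K)`, the Lie algebra of trace-zero `2 × 2` matrices. -/
theorem stmt8 (p : ℕ) [Fact p.Prime] (K : Type) [Field K] [Algebra ℚ_[p] K]
    [FiniteDimensional ℚ_[p] K] (a b : K) (ha : a ≠ 0) (hb : b ≠ 0)
    (hdiv : ∀ x : ℍ[K, a, b], x ≠ 0 → IsUnit x) :
    IsEmpty ((sl1 K K a b) ≃ₗ⁅K⁆ (LieAlgebra.SpecialLinear.sl (Fin 2) K)) :=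
  stmt8_general p K a b hdiv
end

section
/- Let p ≥ 5 be a prime and let k_1, ..., k_t be finite fields of characteristic p. If G is a subgroup of SL_2(k_1) × ... × SL_2(k_t) whose image under the natural quotient map to PSL_2(k_1) × ... × PSL_2(k_t) is the whole group, then G = SL_2(k_1) × ... × SL_2(k_t). -/
/-!
Modulo central elements a commutator `⁅a, b⁆` depends only on the classes of `a` and `b`, so a
subgroup `G` that surjects onto a central quotient contains every commutator; if the ambient
group is perfect, `G` is everything. A finite product of `SL₂(kᵢ)` is perfect as soon as each
factor is, and `SL₂(k)` is perfect when `k` has an element `a ≠ 0` with `a² ≠ 1`; in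
characteristic at least `5` the element `a = 2` works, since `2` and `3` are invertible.
-/

open Subgroup Group

open scoped commutatorElement MatrixGroups

theorem commutatorElement_mul_mul_of_mem_center {H : Type*} [Group H] {z w : H}
    (hz : z ∈ center H) (hw : w ∈ center H) (g h : H) : ⁅g * z, h * w⁆ = ⁅g, h⁆ := by
  have hz1 (c : H) : ⁅z, c⁆ = 1 :=
    commutatorElement_eq_one_iff_mul_comm.mpr (mem_center_iff.mp hz c).symm
  have hw1 (c : H) : ⁅c, w⁆ = 1 :=
    commutatorElement_eq_one_iff_mul_comm.mpr (mem_center_iff.mp hw c)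
  rw [commutatorElement_mul_left_eq_conj_mul, hz1, commutatorElement_mul_right_eq_mul_conj, hw1]
  group

theorem Subgroup.eq_top_of_map_eq_top_of_ker_le_center {H K : Type*} [Group H] [Group K]
    [IsPerfect H] {f : H →* K} (hker : f.ker ≤ center H) {G : Subgroup H}
    (hG : G.map f = ⊤) : G = ⊤ := by
  have hlift (a : H) : ∃ g ∈ G, g⁻¹ * a ∈ center H := by
    obtain ⟨g, hg, hga⟩ : f a ∈ G.map f := hG ▸ mem_top _
    exact ⟨g, hg, hker (by simp [hga])⟩
  rw [eq_top_iff, ← IsPerfect.commutator_eq_top (G := H), _root_.commutator_def, commutator_le]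
  intro a _ b _
  obtain ⟨g, hg, hz⟩ := hlift a
  obtain ⟨h, hh, hw⟩ := hlift b
  rw [← mul_inv_cancel_left g a, ← mul_inv_cancel_left h b,
    commutatorElement_mul_mul_of_mem_center hz hw]
  exact G.commutator_le_self (commutator_mem_commutator hg hh)

instance Group.IsPerfect.pi {η : Type*} [Finite η] {Gs : η → Type*} [∀ i, Group (Gs i)]
    [∀ i, IsPerfect (Gs i)] : IsPerfect (∀ i, Gs i) := by
  rw [isPerfect_def, _root_.commutator_def, ← pi_top Set.univ, commutator_pi_pi_of_finite]
  simp_rw [← _root_.commutator_def, IsPerfect.commutator_eq_top]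

theorem Matrix.SL2.isPerfect {F : Type*} [Field F] (h2 : (2 : F) ≠ 0)
    (h3 : (3 : F) ≠ 0) : IsPerfect SL(2, F) :=
  isPerfect_def.mpr <| SL2.commutator_eq_top h2 fun h ↦ h3 (by linear_combination h)

theorem MonoidHom.ker_pi_le_center {η : Type*} {Gs : η → Type*} [∀ i, Group (Gs i)] :
    (MonoidHom.pi fun i ↦ (QuotientGroup.mk' (center (Gs i))).comp (Pi.evalMonoidHom Gs i)).ker
      ≤ center (∀ i, Gs i) := by
  intro x hx
  rw [Subgroup.center_pi]
  exact fun i _ ↦ (QuotientGroup.eq_one_iff _).mp (congrFun hx i)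

theorem stmt9_general (p : ℕ) (hp5 : 5 ≤ p) (t : ℕ)
    (k : Fin t → Type) [∀ i, Field (k i)]
    (hchar : ∀ i, CharP (k i) p)
    (G : Subgroup (∀ i, Matrix.SpecialLinearGroup (Fin 2) (k i)))
    (hsurj : Subgroup.map
      (Pi.monoidHom fun i =>
        (QuotientGroup.mk' (Subgroup.center (Matrix.SpecialLinearGroup (Fin 2) (k i)))).comp
          (Pi.evalMonoidHom (fun i => Matrix.SpecialLinearGroup (Fin 2) (k i)) i)) G = ⊤) :
    G = ⊤ := by
  have hcast (i : Fin t) (n : ℕ) (hn0 : 0 < n) (hn : n < 5) : (n : k i) ≠ 0 := by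
    rw [Ne, CharP.cast_eq_zero_iff (k i) p]
    exact fun hdvd ↦ by have := Nat.le_of_dvd hn0 hdvd; omega
  have (i : Fin t) : IsPerfect SL(2, k i) :=
    Matrix.SL2.isPerfect (mod_cast hcast i 2 two_pos (by norm_num))
      (mod_cast hcast i 3 three_pos (by norm_num))
  exact eq_top_of_map_eq_top_of_ker_le_center MonoidHom.ker_pi_le_center hsurj

/-- Let `p ≥ 5` be a prime and `k_1, ..., k_t` finite fields of
characteristic `p`. If `G` is a subgroup of `SL₂(k₁) × ... × SL₂(k_t)` whose image under the
natural quotient map to `PSL₂(k₁) × ... × PSL₂(k_t)` (quotient by the centers) is everything,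
then `G` is the whole group. -/
theorem stmt9 (p : ℕ) (hp : p.Prime) (hp5 : 5 ≤ p) (t : ℕ)
    (k : Fin t → Type) [∀ i, Field (k i)] [∀ i, Fintype (k i)]
    (hchar : ∀ i, CharP (k i) p)
    (G : Subgroup (∀ i, Matrix.SpecialLinearGroup (Fin 2) (k i)))
    (hsurj : Subgroup.map
      (Pi.monoidHom fun i =>
        (QuotientGroup.mk' (Subgroup.center (Matrix.SpecialLinearGroup (Fin 2) (k i)))).comp
          (Pi.evalMonoidHom (fun i => Matrix.SpecialLinearGroup (Fin 2) (k i)) i)) G = ⊤) :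
    G = ⊤ :=
  stmt9_general p hp5 t k hchar G hsurj
end

section
/- Let p ≥ 5 be a prime and let O be the ring of integers of a finite extension K of ℚ_p. Then SL_2(O) is equal to the closure of its commutator subgroup (with respect to the p-adic topology on SL_2(O)). -/
/-!
Over a local ring `R`, `SL₂(R)` is generated by the elementary transvections: a matrix whose
lower-left entry is a unit factors as a product of three of them, and otherwise multiplying by
a lower transvection makes that entry a unit. Conjugation by `diag(u, u⁻¹)` scales the upper
transvection with entry `b` to the one with entry `u²b`, so their commutator is the transvection
with entry `(u² - 1)b` (and symmetrically for lower ones). When `u` and `u² - 1` are units, every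
transvection is therefore a commutator and `SL₂(R)` is perfect. For `O` with residue
characteristic `p ≥ 5` take `u = 2`, `u² - 1 = 3`: `SL₂(O)` equals its commutator subgroup, a
fortiori the closure of it.
-/

open Matrix IsLocalRing

/-- `SL₂` of a topological ring carries the subspace topology from the matrix ring. -/
noncomputable instance sltop (n R : Type*) [DecidableEq n] [Fintype n] [CommRing R]
    [TopologicalSpace R] : TopologicalSpace (SpecialLinearGroup n R) :=
  TopologicalSpace.induced (fun A => (A : Matrix n n R)) inferInstance

open MatrixGroups
open scoped commutatorElement

namespace Matrix.SL2

variable {R : Type*} [CommRing R]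

@[simp]
lemma coe_transvection_zero_one (b : R) :
    (SpecialLinearGroup.transvection zero_ne_one b : SL(2, R)) = !![1, b; 0, 1] := by
  ext i j
  fin_cases i <;> fin_cases j <;> simp [SpecialLinearGroup.transvection_coe]

@[simp]
lemma coe_transvection_one_zero (b : R) :
    (SpecialLinearGroup.transvection one_ne_zero b : SL(2, R)) = !![1, 0; b, 1] := by
  ext i j
  fin_cases i <;> fin_cases j <;> simp [SpecialLinearGroup.transvection_coe]

lemma eq_transvection_mul_transvection_mul_transvection (A : SL(2, R)) (hc : IsUnit (A 1 0)) :
    A = SpecialLinearGroup.transvection zero_ne_one ((A 0 0 - 1) * ↑hc.unit⁻¹) *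
      SpecialLinearGroup.transvection one_ne_zero (A 1 0) *
      SpecialLinearGroup.transvection zero_ne_one ((A 1 1 - 1) * ↑hc.unit⁻¹) := by
  have hdet : A 0 0 * A 1 1 - A 0 1 * A 1 0 = 1 := by
    rw [← det_fin_two]; exact A.det_coe
  have hinv : A 1 0 * ↑hc.unit⁻¹ = 1 := hc.mul_val_inv
  apply Subtype.ext
  conv_lhs => rw [eta_fin_two (A : Matrix (Fin 2) (Fin 2) R)]
  simp only [SpecialLinearGroup.coe_mul, coe_transvection_zero_one, coe_transvection_one_zero,
    mul_fin_two, EmbeddingLike.apply_eq_iff_eq, vecCons_inj, and_true]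
  refine ⟨⟨?_, ?_⟩, ?_, ?_⟩
  · linear_combination (1 - A 0 0) * hinv
  · linear_combination
      (-A 0 1 - (A 0 0 - 1) * (A 1 1 - 1) * ↑hc.unit⁻¹) * hinv - ↑hc.unit⁻¹ * hdet
  · ring
  · linear_combination (1 - A 1 1) * hinv

lemma isUnit_transvection_mul_apply_one_zero [IsLocalRing R] (A : SL(2, R))
    (hc : ¬IsUnit (A 1 0)) :
    IsUnit ((SpecialLinearGroup.transvection one_ne_zero 1 * A : SL(2, R)) 1 0) := by
  have hdet : A 0 0 * A 1 1 + -(A 0 1 * A 1 0) = 1 := by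
    rw [← sub_eq_add_neg, ← det_fin_two]; exact A.det_coe
  have ha : IsUnit (A 0 0) := by
    refine (isUnit_or_isUnit_of_isUnit_add (hdet ▸ isUnit_one)).elim
      isUnit_of_mul_isUnit_left fun h ↦ ?_
    exact absurd (isUnit_of_mul_isUnit_right (IsUnit.neg_iff _ |>.mp h)) hc
  have hsum : IsUnit (A 0 0 + A 1 0) :=
    (isUnit_or_isUnit_of_isUnit_add (a := A 0 0 + A 1 0) (b := -A 1 0) (by simpa using ha))
      |>.resolve_right (by simpa using hc)
  simpa [Matrix.mul_apply, add_comm] using hsum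

theorem transvection_induction_of_isLocalRing [IsLocalRing R] (P : SL(2, R) → Prop)
    (htransvec : ∀ (i j : Fin 2) (h : i ≠ j) c, P (SpecialLinearGroup.transvection h c))
    (hmul : ∀ A B, P A → P B → P (A * B)) (A : SL(2, R)) : P A := by
  have hunit (B : SL(2, R)) (hB : IsUnit (B 1 0)) : P B := by
    rw [eq_transvection_mul_transvection_mul_transvection B hB]
    exact hmul _ _ (hmul _ _ (htransvec _ _ _ _) (htransvec _ _ _ _)) (htransvec _ _ _ _)
  by_cases hc : IsUnit (A 1 0)
  · exact hunit A hc
  · have hA : A = SpecialLinearGroup.transvection one_ne_zero (-1) *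
        (SpecialLinearGroup.transvection one_ne_zero 1 * A) := by
      rw [← mul_assoc, ← SpecialLinearGroup.transvection_add, neg_add_cancel,
        SpecialLinearGroup.transvection_coeff_zero, one_mul]
    rw [hA]
    exact hmul _ _ (htransvec _ _ _ _) (hunit _ (isUnit_transvection_mul_apply_one_zero A hc))

def diagOfUnit (u : Rˣ) : SL(2, R) :=
  ⟨!![(u : R), 0; 0, ↑u⁻¹], by simp [det_fin_two_of]⟩

lemma coe_diagOfUnit (u : Rˣ) :
    (diagOfUnit u : Matrix (Fin 2) (Fin 2) R) = !![(u : R), 0; 0, ↑u⁻¹] :=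
  rfl

lemma diagOfUnit_mul_transvection_zero_one (u : Rˣ) (b : R) :
    diagOfUnit u * SpecialLinearGroup.transvection zero_ne_one b =
      SpecialLinearGroup.transvection zero_ne_one ((u : R) ^ 2 * b) * diagOfUnit u := by
  apply Subtype.ext
  simp only [SpecialLinearGroup.coe_mul, coe_diagOfUnit, coe_transvection_zero_one,
    mul_fin_two, EmbeddingLike.apply_eq_iff_eq, vecCons_inj, and_true]
  refine ⟨⟨by ring, ?_⟩, by ring, by ring⟩
  linear_combination -(↑u * b) * u.mul_inv

lemma diagOfUnit_inv_mul_transvection_one_zero (u : Rˣ) (b : R) :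
    diagOfUnit u⁻¹ * SpecialLinearGroup.transvection one_ne_zero b =
      SpecialLinearGroup.transvection one_ne_zero ((u : R) ^ 2 * b) * diagOfUnit u⁻¹ := by
  apply Subtype.ext
  simp only [SpecialLinearGroup.coe_mul, coe_diagOfUnit, coe_transvection_one_zero, inv_inv,
    mul_fin_two, EmbeddingLike.apply_eq_iff_eq, vecCons_inj, and_true]
  refine ⟨⟨by ring, by ring⟩, ?_, by ring⟩
  linear_combination -(↑u * b) * u.mul_inv

lemma commutator_diagOfUnit_transvection_zero_one (u : Rˣ) (b : R) :
    ⁅diagOfUnit u, SpecialLinearGroup.transvection zero_ne_one b⁆ =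
      (SpecialLinearGroup.transvection zero_ne_one (((u : R) ^ 2 - 1) * b) : SL(2, R)) := by
  rw [commutatorElement_def, diagOfUnit_mul_transvection_zero_one, mul_inv_cancel_right,
    SpecialLinearGroup.transvection_inv, ← SpecialLinearGroup.transvection_add, sub_one_mul,
    sub_eq_add_neg]

lemma commutator_diagOfUnit_inv_transvection_one_zero (u : Rˣ) (b : R) :
    ⁅diagOfUnit u⁻¹, SpecialLinearGroup.transvection one_ne_zero b⁆ =
      (SpecialLinearGroup.transvection one_ne_zero (((u : R) ^ 2 - 1) * b) : SL(2, R)) := by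
  rw [commutatorElement_def, diagOfUnit_inv_mul_transvection_one_zero, mul_inv_cancel_right,
    SpecialLinearGroup.transvection_inv, ← SpecialLinearGroup.transvection_add, sub_one_mul,
    sub_eq_add_neg]

lemma transvection_mem_commutator_of_isUnit (u : Rˣ) (hu : IsUnit ((u : R) ^ 2 - 1))
    {i j : Fin 2} (hij : i ≠ j) (c : R) :
    SpecialLinearGroup.transvection hij c ∈ commutator SL(2, R) := by
  have hc : ((u : R) ^ 2 - 1) * (↑hu.unit⁻¹ * c) = c := by
    simpa using hu.unit.mul_inv_cancel_left c
  fin_cases i <;> fin_cases j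
  · exact absurd rfl hij
  · rw [← hc, ← commutator_diagOfUnit_transvection_zero_one]
    exact Subgroup.commutator_mem_commutator (Subgroup.mem_top _) (Subgroup.mem_top _)
  · rw [← hc, ← commutator_diagOfUnit_inv_transvection_one_zero]
    exact Subgroup.commutator_mem_commutator (Subgroup.mem_top _) (Subgroup.mem_top _)
  · exact absurd rfl hij

theorem commutator_eq_top_of_isUnit [IsLocalRing R] (u : Rˣ) (hu : IsUnit ((u : R) ^ 2 - 1)) :
    commutator SL(2, R) = ⊤ :=
  eq_top_iff.2 fun A _ ↦ transvection_induction_of_isLocalRing _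
    (fun _ _ hij c ↦ transvection_mem_commutator_of_isUnit u hu hij c) (fun _ _ ↦ mul_mem) A

end Matrix.SL2

lemma IsLocalRing.isUnit_natCast_of_pos_of_lt {R : Type*} [CommRing R] [IsLocalRing R] {p : ℕ}
    [CharP (ResidueField R) p] {n : ℕ} (h0 : 0 < n) (hn : n < p) : IsUnit (n : R) := by
  rw [← residue_ne_zero_iff_isUnit, map_natCast, ne_eq, CharP.cast_eq_zero_iff _ p]
  exact Nat.not_dvd_of_pos_of_lt h0 hn

theorem stmt10_general (p : ℕ) (hp5 : 5 ≤ p)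
    (O : Type) [CommRing O] [TopologicalSpace O]
    [IsLocalRing O]
    (hchar : CharP (ResidueField O) p) :
    closure ((commutator (SpecialLinearGroup (Fin 2) O) : Subgroup _) :
      Set (SpecialLinearGroup (Fin 2) O)) = Set.univ := by
  have two_isUnit : IsUnit (2 : O) := by
    exact_mod_cast isUnit_natCast_of_pos_of_lt (R := O) (p := p) (n := 2) two_pos (by omega)
  have three_isUnit : IsUnit (3 : O) := by
    exact_mod_cast isUnit_natCast_of_pos_of_lt (R := O) (p := p) (n := 3) three_pos (by omega)
  have two_sq_sub_one : (two_isUnit.unit : O) ^ 2 - 1 = 3 := by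
    rw [IsUnit.unit_spec]; norm_num
  rw [Matrix.SL2.commutator_eq_top_of_isUnit two_isUnit.unit (two_sq_sub_one ▸ three_isUnit),
    Subgroup.coe_top, closure_univ]

/-- Let `p ≥ 5` be a prime and `O` the ring of integers of a finite
extension of `ℚ_p` — modelled abstractly as a compact Hausdorff topological ring which is a
discrete valuation ring of characteristic zero, whose topology is the adic topology of its
maximal ideal, and whose residue field is finite of characteristic `p`. Then `SL₂(O)` is
the closure of its own commutator subgroup (for the `p`-adic topology). -/
theorem stmt10 (p : ℕ) (hp : p.Prime) (hp5 : 5 ≤ p)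
    (O : Type) [CommRing O] [IsDomain O] [TopologicalSpace O] [IsTopologicalRing O]
    [IsLocalRing O] [IsDiscreteValuationRing O] [CharZero O]
    [CompactSpace O] [T2Space O]
    (hadic : IsAdic (maximalIdeal O))
    [Finite (ResidueField O)] (hchar : CharP (ResidueField O) p) :
    closure ((commutator (SpecialLinearGroup (Fin 2) O) : Subgroup _) :
      Set (SpecialLinearGroup (Fin 2) O)) = Set.univ :=
  stmt10_general p hp5 O hchar
end

section
/- Let p be any prime and let O be the ring of integers of a finite extension K of ℚ_p. Then the closure of the commutator subgroup of SL_2(O) is an open subgroup of SL_2(O); equivalently, it has finite index in SL_2(O). -/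
/-!
For a unit `u`, conjugating by `diag(u, u⁻¹)` gives `⁅diag(u, u⁻¹), !![1, x; 0, 1]⁆ =
!![1, (u² - 1) x; 0, 1]`, and similarly for lower unipotents, so the commutator subgroup contains
all unipotents of level `t = u² - 1`. A matrix `g ≡ 1 mod t²` factors as
(lower unipotent) · `diag(v, v⁻¹)` · (upper unipotent) with off-diagonal entries divisible by `t`,
and `diag(v, v⁻¹)` with `v ≡ 1 mod t²` is a product of four level-`t` unipotents; hence the
principal congruence subgroup of level `t²` lies in the commutator subgroup. In a discrete
valuation ring, `u = 1 + π` or `u = 1 + π²` makes `t` a nonzero element of the maximal ideal, so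
`(t²)` is a power of the maximal ideal and open in the adic topology. The congruence subgroup is
then open, and so is every subgroup containing it, such as the closure of the commutator subgroup.
-/

open Matrix IsLocalRing

open scoped MatrixGroups commutatorElement

namespace IsLocalRing

variable {R : Type*} [CommRing R] [IsLocalRing R]

theorem isUnit_one_add_of_mem_maximalIdeal {e : R} (he : e ∈ maximalIdeal R) :
    IsUnit (1 + e) := by
  simpa using isUnit_one_sub_self_of_mem_nonunits (-e) (neg_mem he)

/-- `u = 1 + e` has `u² - 1 = e (2 + e)`, and `e = π` or `e = π²` makes this nonzero, since
otherwise `π² = π`. -/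
theorem exists_unit_sq_sub_one_mem_maximalIdeal_ne_zero [IsDomain R] {π : R}
    (hπ : π ∈ maximalIdeal R) (hπ0 : π ≠ 0) :
    ∃ u : Rˣ, (u : R) ^ 2 - 1 ∈ maximalIdeal R ∧ (u : R) ^ 2 - 1 ≠ 0 := by
  have of_mem : ∀ e ∈ maximalIdeal R, e ≠ 0 → 2 + e ≠ 0 →
      ∃ u : Rˣ, (u : R) ^ 2 - 1 ∈ maximalIdeal R ∧ (u : R) ^ 2 - 1 ≠ 0 := by
    intro e he he0 h2
    have hu := isUnit_one_add_of_mem_maximalIdeal he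
    have hsq : (hu.unit : R) ^ 2 - 1 = e * (2 + e) := by rw [hu.unit_spec]; ring
    exact ⟨hu.unit, hsq ▸ Ideal.mul_mem_right _ _ he, hsq ▸ mul_ne_zero he0 h2⟩
  by_cases h2 : 2 + π = 0
  · refine of_mem (π ^ 2) (Ideal.pow_mem_of_mem _ hπ 2 two_pos) (pow_ne_zero 2 hπ0) fun h2' => ?_
    have hπ1 : π - 1 = 0 :=
      (mul_eq_zero.1 (by linear_combination h2' - h2 : π * (π - 1) = 0)).resolve_left hπ0
    exact (maximalIdeal.isMaximal R).ne_top
      ((Ideal.eq_top_iff_one _).2 (sub_eq_zero.1 hπ1 ▸ hπ))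
  · exact of_mem π hπ hπ0 h2

end IsLocalRing

theorem IsDiscreteValuationRing.isOpen_span_singleton {R : Type*} [CommRing R] [IsDomain R]
    [IsDiscreteValuationRing R] [TopologicalSpace R] [IsTopologicalRing R]
    (hR : IsAdic (IsLocalRing.maximalIdeal R)) {s : R} (hs : s ≠ 0) :
    IsOpen (Ideal.span {s} : Set R) := by
  obtain ⟨ϖ, hϖ⟩ := exists_irreducible R
  obtain ⟨k, hk⟩ := ideal_eq_span_pow_irreducible (s := Ideal.span {s}) (by simpa using hs) hϖ
  rw [hk, ← Ideal.span_singleton_pow, ← (irreducible_iff_uniformizer ϖ).1 hϖ]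
  exact (isAdic_iff.1 hR).1 k

namespace Matrix.SpecialLinearGroup

section Topology

variable {n R : Type*} [DecidableEq n] [Fintype n] [CommRing R] [TopologicalSpace R]

instance [IsTopologicalRing R] : IsTopologicalGroup (SpecialLinearGroup n R) where
  continuous_mul := continuous_induced_rng.2 <|
    (continuous_induced_dom.comp continuous_fst).matrix_mul
      (continuous_induced_dom.comp continuous_snd)
  continuous_inv := continuous_induced_rng.2 <| by
    simpa only [Function.comp_def, coe_inv] using continuous_induced_dom.matrix_adjugate

end Topology

section CongruenceSubgroup

variable (n : Type*) {R : Type*} [DecidableEq n] [Fintype n] [CommRing R]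

def principalCongruenceSubgroup (I : Ideal R) : Subgroup (SpecialLinearGroup n R) :=
  (map (Ideal.Quotient.mk I)).ker

variable {n}

theorem mem_principalCongruenceSubgroup_iff {I : Ideal R} {g : SpecialLinearGroup n R} :
    g ∈ principalCongruenceSubgroup n I ↔ ∀ i j, g i j - (1 : Matrix n n R) i j ∈ I := by
  simp [principalCongruenceSubgroup, SpecialLinearGroup.ext_iff, ← Ideal.Quotient.eq,
    one_apply, apply_ite, Ideal.Quotient.eq_zero_iff_mem]

theorem isOpen_principalCongruenceSubgroup [TopologicalSpace R] [ContinuousSub R]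
    {I : Ideal R} (hI : IsOpen (I : Set R)) :
    IsOpen (principalCongruenceSubgroup n I : Set (SpecialLinearGroup n R)) := by
  have h : (principalCongruenceSubgroup n I : Set (SpecialLinearGroup n R)) =
      ⋂ i, ⋂ j, (fun g : SpecialLinearGroup n R => g i j - (1 : Matrix n n R) i j) ⁻¹' I := by
    ext g
    simp [mem_principalCongruenceSubgroup_iff]
  rw [h]
  exact isOpen_iInter_of_finite fun i => isOpen_iInter_of_finite fun j =>
    hI.preimage ((continuous_induced_dom.matrix_elem i j).sub continuous_const)

end CongruenceSubgroup

section SL2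

variable {R : Type*} [CommRing R]

def upperUnipotent (x : R) : SL(2, R) := ⟨!![1, x; 0, 1], by simp [det_fin_two_of]⟩

def lowerUnipotent (x : R) : SL(2, R) := ⟨!![1, 0; x, 1], by simp [det_fin_two_of]⟩

def diagUnit (u : Rˣ) : SL(2, R) := ⟨!![(u : R), 0; 0, (u⁻¹ : Rˣ)], by simp [det_fin_two_of]⟩

@[simp]
theorem coe_upperUnipotent (x : R) :
    (upperUnipotent x : Matrix (Fin 2) (Fin 2) R) = !![1, x; 0, 1] := rfl

@[simp]
theorem coe_lowerUnipotent (x : R) :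
    (lowerUnipotent x : Matrix (Fin 2) (Fin 2) R) = !![1, 0; x, 1] := rfl

@[simp]
theorem coe_diagUnit (u : Rˣ) :
    (diagUnit u : Matrix (Fin 2) (Fin 2) R) = !![(u : R), 0; 0, (u⁻¹ : Rˣ)] := rfl

theorem commutator_diagUnit_upperUnipotent (u : Rˣ) (x : R) :
    ⁅diagUnit u, upperUnipotent x⁆ = upperUnipotent (((u : R) ^ 2 - 1) * x) := by
  ext i j
  fin_cases i <;> fin_cases j <;> simp [commutatorElement_def, coe_inv, adjugate_fin_two]; ring

theorem commutator_diagUnit_lowerUnipotent (u : Rˣ) (x : R) :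
    ⁅diagUnit u⁻¹, lowerUnipotent x⁆ = lowerUnipotent (((u : R) ^ 2 - 1) * x) := by
  ext i j
  fin_cases i <;> fin_cases j <;> simp [commutatorElement_def, coe_inv, adjugate_fin_two]; ring

theorem upperUnipotent_mem_commutator (u : Rˣ) (x : R) :
    upperUnipotent (((u : R) ^ 2 - 1) * x) ∈ commutator SL(2, R) := by
  rw [← commutator_diagUnit_upperUnipotent]
  exact Subgroup.commutator_mem_commutator (Subgroup.mem_top _) (Subgroup.mem_top _)

theorem lowerUnipotent_mem_commutator (u : Rˣ) (x : R) :
    lowerUnipotent (((u : R) ^ 2 - 1) * x) ∈ commutator SL(2, R) := by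
  rw [← commutator_diagUnit_lowerUnipotent]
  exact Subgroup.commutator_mem_commutator (Subgroup.mem_top _) (Subgroup.mem_top _)

theorem prod_unipotent_eq_diagUnit (t α : R) (v : Rˣ) (hv : (v : R) = 1 + t ^ 2 * α) :
    upperUnipotent (t * α) * lowerUnipotent (t * 1) * upperUnipotent (t * (-α * (v⁻¹ : Rˣ)))
      * lowerUnipotent (t * -(v : R)) = diagUnit v := by
  have h : ((v⁻¹ : Rˣ) : R) * v = 1 := v.inv_mul
  ext i j
  fin_cases i <;> fin_cases j <;> simp
  · linear_combination (t ^ 2 * α * v) * h - (1 + t ^ 2 * α * v * (v⁻¹ : Rˣ)) * hv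
  · linear_combination -(t * α) * h + (t * α * (v⁻¹ : Rˣ)) * hv
  · linear_combination (t * (v - 1)) * h - (t * v * (v⁻¹ : Rˣ)) * hv
  · linear_combination -h + (v⁻¹ : Rˣ) * hv

theorem diagUnit_mem_commutator (u v : Rˣ) (hv : ((u : R) ^ 2 - 1) ^ 2 ∣ (v : R) - 1) :
    diagUnit v ∈ commutator SL(2, R) := by
  obtain ⟨α, hα⟩ := hv
  rw [← prod_unipotent_eq_diagUnit ((u : R) ^ 2 - 1) α v (by linear_combination hα)]
  exact mul_mem (mul_mem (mul_mem (upperUnipotent_mem_commutator u _)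
    (lowerUnipotent_mem_commutator u _)) (upperUnipotent_mem_commutator u _))
    (lowerUnipotent_mem_commutator u _)

theorem eq_lowerUnipotent_mul_diagUnit_mul_upperUnipotent (g : SL(2, R)) (v : Rˣ)
    (hv : g 0 0 = v) :
    g = lowerUnipotent (g 1 0 * (v⁻¹ : Rˣ)) * diagUnit v
      * upperUnipotent ((v⁻¹ : Rˣ) * g 0 1) := by
  have h : ((v⁻¹ : Rˣ) : R) * v = 1 := v.inv_mul
  have hdet := g.det_coe
  rw [det_fin_two, hv] at hdet
  ext i j
  fin_cases i <;> fin_cases j <;> simp [hv]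
  linear_combination -(g 1 1) * h + (v⁻¹ : Rˣ) * hdet

theorem mem_commutator_of_dvd_sub_one (u : Rˣ) {g : SL(2, R)} (hunit : IsUnit (g 0 0))
    (hg : ∀ i j, ((u : R) ^ 2 - 1) ^ 2 ∣ g i j - (1 : Matrix (Fin 2) (Fin 2) R) i j) :
    g ∈ commutator SL(2, R) := by
  set v := hunit.unit
  obtain ⟨β, hβ⟩ := hg 0 1
  obtain ⟨γ, hγ⟩ := hg 1 0
  simp only [one_apply_ne zero_ne_one, one_apply_ne one_ne_zero, sub_zero] at hβ hγ
  rw [eq_lowerUnipotent_mul_diagUnit_mul_upperUnipotent g v hunit.unit_spec, hβ, hγ]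
  refine mul_mem (mul_mem ?_ (diagUnit_mem_commutator u v ?_)) ?_
  · convert lowerUnipotent_mem_commutator u (((u : R) ^ 2 - 1) * γ * (v⁻¹ : Rˣ)) using 2
    ring
  · simpa [v] using hg 0 0
  · convert upperUnipotent_mem_commutator u (((u : R) ^ 2 - 1) * (v⁻¹ : Rˣ) * β) using 2
    ring

end SL2

theorem principalCongruenceSubgroup_le_commutator {R : Type*} [CommRing R] [IsLocalRing R]
    {u : Rˣ} (hu : (u : R) ^ 2 - 1 ∈ maximalIdeal R) :
    principalCongruenceSubgroup (Fin 2) (Ideal.span {((u : R) ^ 2 - 1) ^ 2})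
      ≤ commutator SL(2, R) := by
  intro g hg
  simp only [mem_principalCongruenceSubgroup_iff, Ideal.mem_span_singleton] at hg
  refine mem_commutator_of_dvd_sub_one u ?_ hg
  obtain ⟨α, hα⟩ := hg 0 0
  rw [one_apply_eq, sub_eq_iff_eq_add'] at hα
  exact hα ▸ isUnit_one_add_of_mem_maximalIdeal
    (Ideal.mul_mem_right _ _ (Ideal.pow_mem_of_mem _ hu 2 two_pos))

end Matrix.SpecialLinearGroup

theorem stmt11_general
    (O : Type) [CommRing O] [IsDomain O] [TopologicalSpace O] [IsTopologicalRing O]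
    [IsDiscreteValuationRing O]
    (hadic : IsAdic (maximalIdeal O)) :
    IsOpen (closure ((commutator (SpecialLinearGroup (Fin 2) O) : Subgroup _) :
      Set (SpecialLinearGroup (Fin 2) O))) := by
  obtain ⟨π, hπ⟩ := IsDiscreteValuationRing.exists_irreducible O
  obtain ⟨u, hum, hu0⟩ := exists_unit_sq_sub_one_mem_maximalIdeal_ne_zero
    ((mem_maximalIdeal π).2 hπ.not_isUnit) hπ.ne_zero
  have hopen := SpecialLinearGroup.isOpen_principalCongruenceSubgroup (n := Fin 2)
    (IsDiscreteValuationRing.isOpen_span_singleton hadic (pow_ne_zero 2 hu0))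
  rw [← Subgroup.topologicalClosure_coe]
  exact Subgroup.isOpen_mono ((SpecialLinearGroup.principalCongruenceSubgroup_le_commutator
    hum).trans (Subgroup.le_topologicalClosure _)) hopen

/-- Let `p` be any prime and `O` the ring of integers of a finite
extension of `ℚ_p` — modelled abstractly as a compact Hausdorff topological ring which is a
discrete valuation ring of characteristic zero, whose topology is the adic topology of its
maximal ideal, and whose residue field is finite of characteristic `p`. Then the closure of
the commutator subgroup of `SL₂(O)` is open in `SL₂(O)` (equivalently, being closed, it has
finite index). -/
theorem stmt11 (p : ℕ) (hp : p.Prime)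
    (O : Type) [CommRing O] [IsDomain O] [TopologicalSpace O] [IsTopologicalRing O]
    [IsLocalRing O] [IsDiscreteValuationRing O] [CharZero O]
    [CompactSpace O] [T2Space O]
    (hadic : IsAdic (maximalIdeal O))
    [Finite (ResidueField O)] (hchar : CharP (ResidueField O) p) :
    IsOpen (closure ((commutator (SpecialLinearGroup (Fin 2) O) : Subgroup _) :
      Set (SpecialLinearGroup (Fin 2) O))) :=
  stmt11_general O hadic
end

section
/- Let p_1, ..., p_n be pairwise distinct primes, and for each i let O_i be the ring of integers of a finite extension of ℚ_{p_i}. Let H be a closed subgroup of SL_2(O_1) × ... × SL_2(O_n) whose projection to each factor SL_2(O_i) is an open subgroup of SL_2(O_i). Then H is open in SL_2(O_1) × ... × SL_2(O_n). -/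
open Matrix IsLocalRing

/-!
An element `g` of the first congruence subgroup `Γ(𝔪)` of `SL₂(O)`, with `p ∈ 𝔪`, satisfies
`g ^ (p ^ t) ≡ 1 mod 𝔪 ^ (t + 1)`, because `(1 + x) ^ p - 1 = p x + x² (…)`. So on
`P = ∏ᵢ Γ(𝔪ᵢ)` the powers `g ^ e` tend to `1` in the `i`-th factor as soon as `pᵢ ^ t ∣ e`.
For `h ∈ H ∩ P`, the Chinese remainder theorem gives exponents `eₜ ≡ 1 mod pᵢ ^ t` and
`eₜ ≡ 0 mod pⱼ ^ t` for `j ≠ i`; then `h ^ eₜ` tends to the element with `i`-th coordinate `hᵢ`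
and all others `1`, which lies in `H` since `H` is closed. Hence the closed subgroup
`Nᵢ = {g | (1, …, g, …, 1) ∈ H}` contains the projection of `H ∩ P`, so it has finite relative
index in the open projection of `H`; a closed subgroup of finite index in an open subgroup of a
compact group is open, and `H ⊇ ∏ᵢ Nᵢ` is open.
-/

open Filter Topology

theorem Subgroup.isOpen_of_isClosed_of_relIndex_ne_zero {G : Type*} [Group G]
    [TopologicalSpace G] [IsTopologicalGroup G] [CompactSpace G] {N K : Subgroup G}
    (hN : IsClosed (N : Set G)) (hK : IsOpen (K : Set G)) (hNK : N.relIndex K ≠ 0) :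
    IsOpen (N : Set G) := by
  have : K.FiniteIndex :=
    have := K.quotient_finite_of_isOpen hK
    Subgroup.finiteIndex_of_finite_quotient
  have : (N ⊓ K).FiniteIndex := by
    rw [Subgroup.finiteIndex_iff, ← Subgroup.relIndex_mul_index inf_le_right,
      Subgroup.inf_relIndex_right]
    exact mul_ne_zero hNK Subgroup.FiniteIndex.index_ne_zero
  exact Subgroup.isOpen_mono inf_le_left <|
    (N ⊓ K).isOpen_of_isClosed_of_finiteIndex (hN.inter (K.isClosed_of_isOpen hK))

theorem Int.exists_dvd_and_dvd_sub_one_of_pairwise_coprime {ι : Type*} [Fintype ι]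
    [DecidableEq ι] {p : ι → ℕ} (hp : Pairwise fun i j ↦ (p i).Coprime (p j)) (i : ι) (t : ℕ) :
    ∃ e : ℤ, (∀ j ≠ i, (p j : ℤ) ^ t ∣ e) ∧ (p i : ℤ) ^ t ∣ e - 1 := by
  have hcop : IsCoprime ((∏ j ∈ Finset.univ.erase i, p j ^ t : ℕ) : ℤ) ((p i ^ t : ℕ) : ℤ) :=
    Nat.isCoprime_iff_coprime.mpr <| Nat.Coprime.prod_left fun j hj ↦
      (hp (Finset.ne_of_mem_erase hj)).pow t t
  obtain ⟨u, v, huv⟩ := hcop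
  refine ⟨u * ∏ j ∈ Finset.univ.erase i, (p j : ℤ) ^ t, fun j hj ↦ ?_, -v, ?_⟩
  · exact (Finset.dvd_prod_of_mem _ (Finset.mem_erase.mpr ⟨hj, Finset.mem_univ j⟩)).mul_left u
  · push_cast at huv
    linear_combination huv

section PiGroup

variable {ι : Type*} [Fintype ι] [DecidableEq ι] {G : ι → Type*} [∀ i, Group (G i)]
  [∀ i, TopologicalSpace (G i)]

theorem Subgroup.mulSingle_mem_of_isClosed [∀ i, ContinuousMul (G i)]
    {p : ι → ℕ} (hp : Pairwise fun i j ↦ (p i).Coprime (p j))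
    {H : Subgroup (∀ i, G i)} (hH : IsClosed (H : Set (∀ i, G i))) {h : ∀ i, G i} (hh : h ∈ H)
    (hconv : ∀ i (e : ℕ → ℤ), (∀ t, (p i : ℤ) ^ t ∣ e t) →
      Tendsto (fun t ↦ h i ^ e t) atTop (𝓝 1))
    (i : ι) : Pi.mulSingle i (h i) ∈ H := by
  choose e he he' using Int.exists_dvd_and_dvd_sub_one_of_pairwise_coprime hp i
  refine hH.mem_of_tendsto (b := atTop) (f := fun t ↦ h ^ e t) ?_
    (Eventually.of_forall fun t ↦ H.zpow_mem hh (e t))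
  refine tendsto_pi_nhds.mpr fun j ↦ ?_
  by_cases hji : j = i
  · subst hji
    have hsplit (t : ℕ) : h j ^ e t = h j * h j ^ (e t - 1) := by
      rw [← _root_.zpow_one_add, add_sub_cancel]
    simpa [hsplit] using (hconv j _ he').const_mul (h j)
  · simpa [Pi.mulSingle_eq_of_ne hji] using hconv j e fun t ↦ he t j hji

theorem Subgroup.isOpen_of_mulSingle_mem [∀ i, IsTopologicalGroup (G i)]
    [∀ i, CompactSpace (G i)] {H P : Subgroup (∀ i, G i)}
    (hH : IsClosed (H : Set (∀ i, G i))) (hP : IsOpen (P : Set (∀ i, G i)))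
    (hHP : ∀ h ∈ H, h ∈ P → ∀ i, Pi.mulSingle i (h i) ∈ H)
    (hproj : ∀ i, IsOpen (H.map (Pi.evalMonoidHom G i) : Set (G i))) :
    IsOpen (H : Set (∀ i, G i)) := by
  let N (i : ι) : Subgroup (G i) := H.comap (MonoidHom.mulSingle G i)
  have : P.FiniteIndex :=
    have := P.quotient_finite_of_isOpen hP
    Subgroup.finiteIndex_of_finite_quotient
  have hN (i : ι) : IsOpen (N i : Set (G i)) := by
    refine Subgroup.isOpen_of_isClosed_of_relIndex_ne_zero
      (hH.preimage (continuous_mulSingle i)) (hproj i) ?_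
    have hle : H ⊓ P ≤ (N i).comap (Pi.evalMonoidHom G i) := fun h hh ↦ hHP h hh.1 hh.2 i
    rw [← Subgroup.relIndex_comap]
    refine ne_zero_of_dvd_ne_zero ?_ (Subgroup.relIndex_dvd_of_le_left H hle)
    rw [Subgroup.inf_relIndex_left]
    exact (Subgroup.isFiniteRelIndex_of_finiteIndex (K := H)).relIndex_ne_zero
  have hle : Subgroup.pi Set.univ N ≤ H :=
    Subgroup.pi_le_iff.mpr fun i ↦ Subgroup.map_le_iff_le_comap.mpr le_rfl
  refine Subgroup.isOpen_mono hle ?_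
  rw [Subgroup.coe_pi]
  exact isOpen_set_pi Set.finite_univ fun i _ ↦ hN i

end PiGroup

theorem one_add_pow_sub_one_sub_nsmul_mem {A : Type*} [Ring A] (J : Ideal A) {x : A}
    (hx : x * x ∈ J) (N : ℕ) : (1 + x) ^ N - 1 - N • x ∈ J := by
  induction N with
  | zero => simp
  | succ N ih =>
    have h : (1 + x) ^ (N + 1) - 1 - (N + 1) • x
        = (1 + x) * ((1 + x) ^ N - 1 - N • x) + N • (x * x) := by
      simp only [pow_succ', mul_sub, mul_one, add_mul, one_mul, mul_smul_comm, succ_nsmul,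
        smul_add]
      abel
    rw [h]
    exact J.add_mem (J.mul_mem_left _ ih) (J.nsmul_mem hx N)

theorem Ideal.mul_mem_matrix_mul {R n : Type*} [CommRing R] [Fintype n] [DecidableEq n]
    {I J : Ideal R} {A B : Matrix n n R} (hA : A ∈ I.matrix n) (hB : B ∈ J.matrix n) :
    A * B ∈ (I * J).matrix n := fun a b ↦
  Submodule.sum_mem _ fun c _ ↦ Ideal.mul_mem_mul (hA a c) (hB c b)

theorem IsAdic.tendsto_zero_of_mem_pow {R : Type*} [CommRing R] [TopologicalSpace R]
    {I : Ideal R} (hI : IsAdic I) {x : ℕ → R} (hx : ∀ t, x t ∈ I ^ (t + 1)) :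
    Tendsto x atTop (𝓝 0) :=
  hI.hasBasis_nhds_zero.tendsto_right_iff.mpr fun k _ ↦
    (eventually_ge_atTop k).mono fun t ht ↦ Ideal.pow_le_pow_right (by omega) (hx t)

instance Matrix.compactSpace {m n R : Type*} [TopologicalSpace R] [CompactSpace R] :
    CompactSpace (Matrix m n R) :=
  inferInstanceAs (CompactSpace (m → n → R))

namespace Matrix.SpecialLinearGroup

variable {n R : Type*} [Fintype n] [DecidableEq n] [CommRing R]

def congruenceSubgroup (I : Ideal R) : Subgroup (SpecialLinearGroup n R) :=
  (map (Ideal.Quotient.mk I)).ker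

theorem mem_congruenceSubgroup_iff {I : Ideal R} {g : SpecialLinearGroup n R} :
    g ∈ congruenceSubgroup I ↔ (g : Matrix n n R) - 1 ∈ I.matrix n := by
  refine MonoidHom.mem_ker.trans <|
    (SpecialLinearGroup.ext_iff _ _).trans <| forall₂_congr fun a b ↦ ?_
  change Ideal.Quotient.mk I ((g : Matrix n n R) a b) = (1 : Matrix n n (R ⧸ I)) a b ↔
    (g : Matrix n n R) a b - (1 : Matrix n n R) a b ∈ I
  rw [← Ideal.Quotient.mk_eq_mk_iff_sub_mem, ← map_one (Ideal.Quotient.mk I).mapMatrix]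
  rfl

theorem pow_mem_congruenceSubgroup_pow_succ {I : Ideal R} {N k : ℕ} (hN : (N : R) ∈ I)
    (hk : 1 ≤ k) {g : SpecialLinearGroup n R} (hg : g ∈ congruenceSubgroup (I ^ k)) :
    g ^ N ∈ congruenceSubgroup (I ^ (k + 1)) := by
  rw [mem_congruenceSubgroup_iff] at hg ⊢
  set x := (g : Matrix n n R) - 1
  have hxx : x * x ∈ (I ^ (k + 1)).matrix n :=
    Ideal.matrix_monotone n (by rw [← pow_add]; exact Ideal.pow_le_pow_right (by omega))
      (Ideal.mul_mem_matrix_mul hg hg)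
  have hNx : N • x ∈ (I ^ (k + 1)).matrix n := fun a b ↦ by
    rw [smul_apply, nsmul_eq_mul, pow_succ']
    exact Ideal.mul_mem_mul hN (hg a b)
  have h := ((I ^ (k + 1)).matrix n).add_mem (one_add_pow_sub_one_sub_nsmul_mem _ hxx N) hNx
  rwa [sub_add_cancel, add_sub_cancel, ← SpecialLinearGroup.coe_pow] at h

theorem pow_pow_mem_congruenceSubgroup_pow {I : Ideal R} {N : ℕ} (hN : (N : R) ∈ I)
    {g : SpecialLinearGroup n R} (hg : g ∈ congruenceSubgroup I) (t : ℕ) :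
    g ^ N ^ t ∈ congruenceSubgroup (I ^ (t + 1)) := by
  induction t with
  | zero => simpa using hg
  | succ t ih =>
    rw [pow_succ N t, _root_.pow_mul]
    exact pow_mem_congruenceSubgroup_pow_succ hN (by omega) ih

section Topology

variable [TopologicalSpace R] [IsTopologicalRing R]

/- `sltop` is Mathlib's subspace topology on `SL n R` only up to unfolding, which instance
search does not do, so Mathlib's instances are restated for it. -/
instance : IsTopologicalGroup (SpecialLinearGroup n R) := topologicalGroup

instance [T2Space R] : T2Space (SpecialLinearGroup n R) :=
  isClosedEmbedding_val.isEmbedding.t2Space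

instance [T2Space R] [CompactSpace R] : CompactSpace (SpecialLinearGroup n R) :=
  isClosedEmbedding_val.compactSpace

theorem isOpen_congruenceSubgroup {I : Ideal R} (hI : IsOpen (I : Set R)) :
    IsOpen (congruenceSubgroup (n := n) I : Set (SpecialLinearGroup n R)) := by
  have h : (congruenceSubgroup (n := n) I : Set (SpecialLinearGroup n R))
      = ⋂ a, ⋂ b, (fun g : SpecialLinearGroup n R ↦ ((g : Matrix n n R) - 1) a b) ⁻¹' I := by
    ext g
    simp [mem_congruenceSubgroup_iff]
  rw [h]
  exact isOpen_iInter_of_finite fun a ↦ isOpen_iInter_of_finite fun b ↦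
    hI.preimage ((continuous_induced_dom.sub continuous_const).matrix_elem a b)

theorem tendsto_one_of_mem_congruenceSubgroup_pow {I : Ideal R} (hI : IsAdic I)
    {g : ℕ → SpecialLinearGroup n R} (hg : ∀ t, g t ∈ congruenceSubgroup (I ^ (t + 1))) :
    Tendsto g atTop (𝓝 1) := by
  rw [(IsInducing.induced _).tendsto_nhds_iff]
  refine tendsto_pi_nhds.mpr fun a ↦ tendsto_pi_nhds.mpr fun b ↦ ?_
  rw [← tendsto_sub_nhds_zero_iff]
  exact hI.tendsto_zero_of_mem_pow fun t ↦ mem_congruenceSubgroup_iff.mp (hg t) a b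

theorem tendsto_zpow_of_mem_congruenceSubgroup {I : Ideal R} (hI : IsAdic I) {N : ℕ}
    (hN : (N : R) ∈ I) {g : SpecialLinearGroup n R} (hg : g ∈ congruenceSubgroup I)
    {e : ℕ → ℤ} (he : ∀ t, (N : ℤ) ^ t ∣ e t) : Tendsto (fun t ↦ g ^ e t) atTop (𝓝 1) :=
  tendsto_one_of_mem_congruenceSubgroup_pow hI fun t ↦ by
    obtain ⟨d, hd⟩ := he t
    rw [hd, _root_.zpow_mul, ← Nat.cast_pow, zpow_natCast]
    exact Subgroup.zpow_mem _ (pow_pow_mem_congruenceSubgroup_pow hN hg t) _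

end Topology

end Matrix.SpecialLinearGroup

theorem stmt12_general (n : ℕ) (p : Fin n → ℕ) (hp : ∀ i, (p i).Prime)
    (hdist : ∀ i j, i ≠ j → p i ≠ p j)
    (O : Fin n → Type) [∀ i, CommRing (O i)]
    [∀ i, TopologicalSpace (O i)] [∀ i, IsTopologicalRing (O i)]
    [∀ i, IsLocalRing (O i)]
    [∀ i, CompactSpace (O i)] [∀ i, T2Space (O i)]
    (hadic : ∀ i, IsAdic (maximalIdeal (O i)))
    (hchar : ∀ i, CharP (ResidueField (O i)) (p i))
    (H : Subgroup (∀ i, SpecialLinearGroup (Fin 2) (O i)))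
    (hclosed : IsClosed (H : Set (∀ i, SpecialLinearGroup (Fin 2) (O i))))
    (hproj : ∀ i, IsOpen ((Subgroup.map
      (Pi.evalMonoidHom (fun i => SpecialLinearGroup (Fin 2) (O i)) i) H :
        Subgroup (SpecialLinearGroup (Fin 2) (O i))) : Set (SpecialLinearGroup (Fin 2) (O i)))) :
    IsOpen (H : Set (∀ i, SpecialLinearGroup (Fin 2) (O i))) := by
  have hp_mem (i : Fin n) : (p i : O i) ∈ maximalIdeal (O i) := by
    have := hchar i
    rw [← residue_eq_zero_iff, map_natCast, CharP.cast_eq_zero]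
  have hcoprime : Pairwise fun i j ↦ (p i).Coprime (p j) := fun i j hij ↦
    (Nat.coprime_primes (hp i) (hp j)).mpr (hdist i j hij)
  let P := Subgroup.pi Set.univ fun i ↦
    SpecialLinearGroup.congruenceSubgroup (n := Fin 2) (maximalIdeal (O i))
  have hP : IsOpen (P : Set (∀ i, SpecialLinearGroup (Fin 2) (O i))) := by
    rw [Subgroup.coe_pi]
    exact isOpen_set_pi Set.finite_univ fun i _ ↦
      SpecialLinearGroup.isOpen_congruenceSubgroup <| by
        simpa using (isAdic_iff.mp (hadic i)).1 1
  refine Subgroup.isOpen_of_mulSingle_mem hclosed hP (fun h hh hhP ↦ ?_) hproj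
  exact Subgroup.mulSingle_mem_of_isClosed hcoprime hclosed hh fun j _ ↦
    SpecialLinearGroup.tendsto_zpow_of_mem_congruenceSubgroup (hadic j) (hp_mem j) (hhP j trivial)

/-- Let `p₁, ..., pₙ` be pairwise distinct primes and, for each `i`, let
`Oᵢ` be the ring of integers of a finite extension of `ℚ_{pᵢ}` — modelled abstractly as a
compact Hausdorff topological ring which is a discrete valuation ring of characteristic
zero, with adic topology and finite residue field of characteristic `pᵢ`. If `H` is a
closed subgroup of `SL₂(O₁) × ... × SL₂(Oₙ)` whose projection to each factor `SL₂(Oᵢ)` is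
open, then `H` is open. -/
theorem stmt12 (n : ℕ) (p : Fin n → ℕ) (hp : ∀ i, (p i).Prime)
    (hdist : ∀ i j, i ≠ j → p i ≠ p j)
    (O : Fin n → Type) [∀ i, CommRing (O i)] [∀ i, IsDomain (O i)]
    [∀ i, TopologicalSpace (O i)] [∀ i, IsTopologicalRing (O i)]
    [∀ i, IsLocalRing (O i)] [∀ i, IsDiscreteValuationRing (O i)] [∀ i, CharZero (O i)]
    [∀ i, CompactSpace (O i)] [∀ i, T2Space (O i)]
    (hadic : ∀ i, IsAdic (maximalIdeal (O i)))
    [∀ i, Finite (ResidueField (O i))] (hchar : ∀ i, CharP (ResidueField (O i)) (p i))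
    (H : Subgroup (∀ i, SpecialLinearGroup (Fin 2) (O i)))
    (hclosed : IsClosed (H : Set (∀ i, SpecialLinearGroup (Fin 2) (O i))))
    (hproj : ∀ i, IsOpen ((Subgroup.map
      (Pi.evalMonoidHom (fun i => SpecialLinearGroup (Fin 2) (O i)) i) H :
        Subgroup (SpecialLinearGroup (Fin 2) (O i))) : Set (SpecialLinearGroup (Fin 2) (O i)))) :
    IsOpen (H : Set (∀ i, SpecialLinearGroup (Fin 2) (O i))) :=
  stmt12_general n p hp hdist O hadic hchar H hclosed hproj
end

section
/- Let G = ∏_p ℤ_p^×, the product over all primes p of the unit groups of the p-adic integers, with the product topology. Let H = { x ∈ G : x_p is a square in ℤ_p^× for every odd prime p } ∪ { x ∈ G : x_p is not a square in ℤ_p^× for every odd prime p }. Then H is a closed subgroup of G whose projection to ℤ_p^× is surjective for every prime p, but H is not open in G. -/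
instance (p : Nat.Primes) : Fact (p : ℕ).Prime := ⟨p.2⟩

/-!
For odd `p`, Hensel's lemma shows that a unit of `ℤ_p` is a square iff its residue mod `p` is, so
the squares of `ℤ_p^×` form the kernel of the Legendre symbol of the residue: an open subgroup of
index 2.

Given subgroups `S i` of index 2 of groups `G i` for `i ∈ J`, the elements of `∏ G i` lying in
`S i` for all `i ∈ J` or outside `S i` for all `i ∈ J` form a subgroup, because in a subgroup of
index 2 the product of two non-members is a member. It is closed when the `S i` are open (hence
clopen), it projects onto every factor, and it is not open when `J` is infinite: every
neighbourhood of `1` contains an element that is trivial except at a single `j ∈ J`, where it lies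
outside `S j`.
-/

open Set Function

theorem Subgroup.exists_notMem_of_index_eq_two {K : Type*} [Group K] {H : Subgroup K}
    (h : H.index = 2) : ∃ g, g ∉ H :=
  SetLike.exists_not_mem_of_ne_top H (by rw [ne_eq, ← index_eq_one, h]; norm_num)

section AllOrNone

variable {ι : Type*} {G : ι → Type*} [∀ i, Group (G i)]

def Subgroup.allOrNone (J : Set ι) (S : ∀ i, Subgroup (G i)) (hS : ∀ i ∈ J, (S i).index = 2) :
    Subgroup (∀ i, G i) where
  carrier := J.pi (fun i => S i) ∪ J.pi (fun i => (S i : Set (G i))ᶜ)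
  one_mem' := Or.inl fun i _ => (S i).one_mem
  mul_mem' := by
    rintro x y (hx | hx) (hy | hy) <;> [left; right; right; left] <;> intro i hi <;>
      have hxi := hx i hi <;> have hyi := hy i hi <;>
      simp only [mem_compl_iff, SetLike.mem_coe, Pi.mul_apply,
        Subgroup.mul_mem_iff_of_index_two (hS i hi)] at hxi hyi ⊢ <;> tauto
  inv_mem' := by
    rintro x (hx | hx) <;> [left; right] <;> intro i hi <;> simpa using hx i hi

namespace Subgroup

variable {J : Set ι} {S : ∀ i, Subgroup (G i)} {hS : ∀ i ∈ J, (S i).index = 2}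

theorem coe_allOrNone : (allOrNone J S hS : Set (∀ i, G i)) =
    J.pi (fun i => S i) ∪ J.pi (fun i => (S i : Set (G i))ᶜ) :=
  rfl

theorem eval_image_allOrNone (i : ι) : eval i '' (allOrNone J S hS : Set (∀ i, G i)) = univ := by
  classical
  have hin : (J.pi fun j => (S j : Set (G j))).Nonempty := ⟨1, fun j _ => (S j).one_mem⟩
  have hout : (J.pi fun j => (S j : Set (G j))ᶜ).Nonempty := pi_nonempty_iff.mpr fun j =>
    if hj : j ∈ J then (exists_notMem_of_index_eq_two (hS j hj)).imp fun _ hg _ => hg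
    else ⟨1, fun hj' => absurd hj' hj⟩
  rw [coe_allOrNone, image_union]
  by_cases hi : i ∈ J
  · rw [eval_image_pi hi hin, eval_image_pi hi hout, union_compl_self]
  · rw [eval_image_pi_of_notMem hi, if_pos hin, univ_union]

theorem isClosed_allOrNone [∀ i, TopologicalSpace (G i)] [∀ i, IsTopologicalGroup (G i)]
    (hopen : ∀ i ∈ J, IsOpen (S i : Set (G i))) : IsClosed (allOrNone J S hS : Set (∀ i, G i)) :=
  (isClosed_set_pi fun i hi => (S i).isClosed_of_isOpen (hopen i hi)).union
    (isClosed_set_pi fun i hi => (hopen i hi).isClosed_compl)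

theorem not_isOpen_allOrNone [∀ i, TopologicalSpace (G i)] (hJ : J.Infinite) :
    ¬ IsOpen (allOrNone J S hS : Set (∀ i, G i)) := by
  classical
  intro hopen
  have hnhds := hopen.mem_nhds (allOrNone J S hS).one_mem
  rw [nhds_pi, Filter.mem_pi] at hnhds
  obtain ⟨I, hI, t, ht, hsub⟩ := hnhds
  obtain ⟨j, hjJ, hjI⟩ := hJ.exists_notMem_finite hI
  obtain ⟨k, hkJ, hkj⟩ := hJ.nontrivial.exists_ne j
  obtain ⟨g, hg⟩ := exists_notMem_of_index_eq_two (hS j hjJ)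
  have hmem : Pi.mulSingle j g ∈ I.pi t := fun i hi => by
    rw [Pi.mulSingle_eq_of_ne (ne_of_mem_of_not_mem hi hjI)]
    exact mem_of_mem_nhds (ht i)
  rcases hsub hmem with h | h
  · exact hg (by simpa using h j hjJ)
  · exact h k hkJ (by simp [Pi.mulSingle_eq_of_ne hkj, (S k).one_mem])

end Subgroup

end AllOrNone

namespace PadicInt

variable {p : ℕ} [Fact p.Prime]

theorem toZMod_eq_toZMod_iff {x y : ℤ_[p]} : toZMod x = toZMod y ↔ ‖x - y‖ < 1 := by
  rw [← sub_eq_zero, ← map_sub, ← RingHom.mem_ker, ker_toZMod, IsLocalRing.mem_maximalIdeal,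
    mem_nonunits]

theorem norm_two_eq_one (hp : p ≠ 2) : ‖(2 : ℤ_[p])‖ = 1 := by
  exact_mod_cast norm_natCast_eq_one_iff.mpr ((Nat.coprime_primes Fact.out Nat.prime_two).mpr hp)

theorem isSquare_of_norm_sub_sq_lt_one (hp : p ≠ 2) {u a : ℤ_[p]} (ha : ‖a‖ = 1)
    (h : ‖u - a ^ 2‖ < 1) : IsSquare u := by
  open Polynomial in
  have hnorm : ‖aeval a (X ^ 2 - C u)‖ < ‖aeval a (derivative (X ^ 2 - C u))‖ ^ 2 := by
    simpa [norm_mul, one_add_one_eq_two, norm_two_eq_one hp, ha, norm_sub_rev] using h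
  obtain ⟨z, hz, -⟩ := hensels_lemma hnorm
  refine ⟨z, ?_⟩
  simpa [sub_eq_zero, sq, eq_comm] using hz

theorem isSquare_iff_isSquare_toZMod (hp : p ≠ 2) {u : ℤ_[p]ˣ} :
    IsSquare u ↔ IsSquare (toZMod (u : ℤ_[p])) := by
  refine ⟨fun h => (h.map (Units.coeHom ℤ_[p])).map toZMod, fun ⟨b, hb⟩ => ?_⟩
  obtain ⟨a, rfl⟩ := ZMod.ringHom_surjective toZMod b
  have ha : ‖a‖ = 1 := isUnit_iff.mp <| isUnit_of_map_unit toZMod a <|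
    isUnit_of_mul_isUnit_left (hb ▸ u.isUnit.map toZMod)
  obtain ⟨z, hz⟩ := isSquare_of_norm_sub_sq_lt_one hp ha
    (toZMod_eq_toZMod_iff.mp (by rw [hb, map_pow, sq]))
  have hzu : IsUnit z := isUnit_of_mul_isUnit_left (hz ▸ u.isUnit)
  exact ⟨hzu.unit, Units.ext hz⟩

variable (p) in
noncomputable def unitsQuadraticChar : ℤ_[p]ˣ →* ℤˣ :=
  (quadraticChar (ZMod p)).toUnitHom.comp (Units.map toZMod.toMonoidHom)

theorem ker_unitsQuadraticChar (hp : p ≠ 2) :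
    (unitsQuadraticChar p).ker = Subgroup.square ℤ_[p]ˣ := by
  ext u
  have hu : toZMod (u : ℤ_[p]) ≠ 0 := (u.isUnit.map toZMod).ne_zero
  rw [MonoidHom.mem_ker, Subgroup.mem_square, isSquare_iff_isSquare_toZMod hp,
    ← quadraticChar_one_iff_isSquare hu, ← Units.val_inj]
  rfl

theorem unitsQuadraticChar_surjective (hp : p ≠ 2) :
    Surjective (unitsQuadraticChar p) := by
  have hchar : ringChar (ZMod p) ≠ 2 := by rwa [ZMod.ringChar_zmod_n]
  obtain ⟨a, ha⟩ := quadraticChar_exists_neg_one' hchar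
  obtain ⟨v, rfl⟩ := IsLocalRing.surjective_units_map_of_local_ringHom toZMod
    (ZMod.ringHom_surjective toZMod) inferInstance a
  intro ε
  rcases Int.units_eq_one_or ε with rfl | rfl
  · exact ⟨1, map_one _⟩
  · exact ⟨v, Units.ext ha⟩

theorem index_square_units_eq_two (hp : p ≠ 2) : (Subgroup.square ℤ_[p]ˣ).index = 2 := by
  rw [← ker_unitsQuadraticChar hp, Subgroup.index_ker,
    MonoidHom.range_eq_top.mpr (unitsQuadraticChar_surjective hp)]
  simp

theorem isOpen_square_units (hp : p ≠ 2) : IsOpen (Subgroup.square ℤ_[p]ˣ : Set ℤ_[p]ˣ) := by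
  refine Subgroup.isOpen_of_mem_nhds _ (g := 1) <| Filter.mem_of_superset
    (Units.continuous_val.continuousAt.preimage_mem_nhds (Metric.ball_mem_nhds _ one_pos)) ?_
  intro u hu
  rw [mem_preimage, Metric.mem_ball, dist_eq_norm, ← toZMod_eq_toZMod_iff] at hu
  rw [SetLike.mem_coe, Subgroup.mem_square, isSquare_iff_isSquare_toZMod hp, hu, Units.val_one,
    map_one]
  exact IsSquare.one

end PadicInt

/-- In `G = ∏_p ℤ_p^×`, the set
`H = {x : x_p is a square for all odd p} ∪ {x : x_p is a nonsquare for all odd p}`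
is a closed subgroup whose projection to every `ℤ_p^×` is surjective, but which is
not open in `G`. -/
theorem stmt14 :
    let G := ∀ p : Nat.Primes, ℤ_[(p : ℕ)]ˣ
    let H : Set G := {x | ∀ p : Nat.Primes, (p : ℕ) ≠ 2 → IsSquare (x p)} ∪
      {x | ∀ p : Nat.Primes, (p : ℕ) ≠ 2 → ¬ IsSquare (x p)}
    (∃ H' : Subgroup G, (H' : Set G) = H) ∧
    IsClosed H ∧
    (∀ p : Nat.Primes, (fun x : G => x p) '' H = Set.univ) ∧
    ¬ IsOpen H := by
  intro G H
  let H' : Subgroup G := Subgroup.allOrNone {p | (p : ℕ) ≠ 2}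
    (fun p => Subgroup.square ℤ_[(p : ℕ)]ˣ) fun _ hp => PadicInt.index_square_units_eq_two hp
  have hodd : {p : Nat.Primes | (p : ℕ) ≠ 2}.Infinite :=
    Set.Finite.infinite_compl (s := {p : Nat.Primes | (p : ℕ) = 2})
      (Set.Subsingleton.finite fun _ hp _ hq => Subtype.ext (hp.trans hq.symm))
  rw [show H = H' from rfl]
  exact ⟨⟨H', rfl⟩, Subgroup.isClosed_allOrNone fun _ hp => PadicInt.isOpen_square_units hp,
    Subgroup.eval_image_allOrNone, Subgroup.not_isOpen_allOrNone hodd⟩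
end

section
/- Let F be a finite field of characteristic ≥ 5, and let t ∈ GL_2(F) be such that for every u ∈ SL_2(F) one has u^{-1} t u ∈ { t, −t }. Then t is a scalar matrix. -/
/-- Let `F` be a finite field of characteristic `≥ 5` and let
`t ∈ GL₂(F)` be such that `u⁻¹ t u ∈ {t, -t}` for every `u ∈ SL₂(F)`. Then `t` is a
scalar matrix `c • 1` with `c ∈ Fˣ`. -/
theorem stmt15 (F : Type) [Field F] [Fintype F] (hchar : 5 ≤ ringChar F)
    (t : GL (Fin 2) F)
    (h : ∀ u : Matrix.SpecialLinearGroup (Fin 2) F,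
      (Matrix.SpecialLinearGroup.toGL u)⁻¹ * t * Matrix.SpecialLinearGroup.toGL u = t ∨
      (Matrix.SpecialLinearGroup.toGL u)⁻¹ * t * Matrix.SpecialLinearGroup.toGL u = -t) :
    ∃ c : Fˣ, (t : Matrix (Fin 2) (Fin 2) F) = (c : F) • (1 : Matrix (Fin 2) (Fin 2) F) := by
  -- char ≠ 2
  have h2 : (2 : F) ≠ 0 := by
    intro h0
    have hd : ringChar F ∣ 2 := ringChar.dvd (by exact_mod_cast h0)
    have := Nat.le_of_dvd (by norm_num) hd
    omega
  set T : Matrix (Fin 2) (Fin 2) F := (t : Matrix (Fin 2) (Fin 2) F) with hT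
  have hdet : T.det ≠ 0 := by
    have : IsUnit T := t.isUnit
    exact ((Matrix.isUnit_iff_isUnit_det T).mp this).ne_zero
  set a := T 0 0; set b := T 0 1; set c := T 1 0; set d := T 1 1
  have hTe : T = !![a, b; c, d] := Matrix.eta_fin_two T
  -- upper unipotent
  have hu1 : (!![1, 1; 0, 1] : Matrix (Fin 2) (Fin 2) F).det = 1 := by
    simp [Matrix.det_fin_two_of]
  have hu2 : (!![1, 0; 1, 1] : Matrix (Fin 2) (Fin 2) F).det = 1 := by
    simp [Matrix.det_fin_two_of]
  let u1 : Matrix.SpecialLinearGroup (Fin 2) F := ⟨_, hu1⟩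
  let u2 : Matrix.SpecialLinearGroup (Fin 2) F := ⟨_, hu2⟩
  have key : ∀ u : Matrix.SpecialLinearGroup (Fin 2) F,
      T * (u : Matrix (Fin 2) (Fin 2) F) = (u : Matrix (Fin 2) (Fin 2) F) * T ∨
      T * (u : Matrix (Fin 2) (Fin 2) F) = -((u : Matrix (Fin 2) (Fin 2) F) * T) := by
    intro u
    rcases h u with he | he
    · left
      have : t * Matrix.SpecialLinearGroup.toGL u = Matrix.SpecialLinearGroup.toGL u * t := by
        conv_rhs => rw [← he]
        rw [← mul_assoc, ← mul_assoc, mul_inv_cancel, one_mul]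
      have := congrArg Units.val this
      simpa using this
    · right
      have : t * Matrix.SpecialLinearGroup.toGL u = Matrix.SpecialLinearGroup.toGL u * (-t) := by
        conv_rhs => rw [← he]
        rw [← mul_assoc, ← mul_assoc, mul_inv_cancel, one_mul]
      have := congrArg Units.val this
      simpa using this
  have k1 := key u1
  have k2 := key u2
  rw [hTe] at k1 k2
  simp only [u1, u2, Matrix.SpecialLinearGroup.coe_mk] at k1 k2
  rw [show (!![a,b;c,d] * !![1,1;0,1] : Matrix (Fin 2) (Fin 2) F) = !![a, a+b; c, c+d] by
        simp [Matrix.mul_fin_two],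
      show (!![1,1;0,1] * !![a,b;c,d] : Matrix (Fin 2) (Fin 2) F) = !![a+c, b+d; c, d] by
        simp [Matrix.mul_fin_two]] at k1
  rw [show (!![a,b;c,d] * !![1,0;1,1] : Matrix (Fin 2) (Fin 2) F) = !![a+b, b; c+d, d] by
        simp [Matrix.mul_fin_two],
      show (!![1,0;1,1] * !![a,b;c,d] : Matrix (Fin 2) (Fin 2) F) = !![a, b; a+c, b+d] by
        simp [Matrix.mul_fin_two]] at k2
  -- extract equations
  have hc0 : c = 0 ∧ a = d := by
    rcases k1 with he | he
    · have e1 : a = a + c := congrFun (congrFun he 0) 0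
      have e2 : a + b = b + d := congrFun (congrFun he 0) 1
      constructor
      · linear_combination -e1
      · linear_combination e2
    · have e1 : a = -(a + c) := by
        have := congrFun (congrFun he 0) 0; simpa using this
      have e3 : c = -c := by
        have := congrFun (congrFun he 1) 0; simpa using this
      have e4 : c + d = -d := by
        have := congrFun (congrFun he 1) 1; simpa using this
      have hc : c = 0 := by
        have : 2 * c = 0 := by linear_combination e3
        rcases mul_eq_zero.mp this with h' | h'
        · exact absurd h' h2
        · exact h'
      have ha : a = 0 := by
        have : 2 * a = 0 := by linear_combination e1 - hc
        rcases mul_eq_zero.mp this with h' | h'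
        · exact absurd h' h2
        · exact h'
      have hdd : d = 0 := by
        have : 2 * d = 0 := by linear_combination e4 - hc
        rcases mul_eq_zero.mp this with h' | h'
        · exact absurd h' h2
        · exact h'
      exfalso
      apply hdet
      rw [hTe, Matrix.det_fin_two_of, hc, ha, hdd]
      ring
  have hb0 : b = 0 := by
    rcases k2 with he | he
    · have e1 : a + b = a := congrFun (congrFun he 0) 0
      linear_combination e1
    · have e3 : b = -b := by
        have := congrFun (congrFun he 0) 1; simpa using this
      have : 2 * b = 0 := by linear_combination e3
      rcases mul_eq_zero.mp this with h' | h'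
      · exact absurd h' h2
      · exact h'
  obtain ⟨hc, had⟩ := hc0
  have ha0 : a ≠ 0 := by
    intro h0
    apply hdet
    rw [hTe, Matrix.det_fin_two_of, hc, hb0, h0, ← had, h0]
    ring
  refine ⟨Units.mk0 a ha0, ?_⟩
  rw [hTe, hb0, hc, ← had]
  ext i j
  fin_cases i <;> fin_cases j <;> simp [Matrix.one_fin_two]
end

section
/- Let L be a field of characteristic 0 and let A, B ∈ GL_2(L) satisfy det(A)·det(B) = 1. Let A ⊗ B ∈ GL_4(L) denote the Kronecker (tensor) product of A and B, acting on L⁴ ≅ L² ⊗ L². Then the rank of the matrix A ⊗ B − I_4 is not equal to 3; equivalently, the quotient L⁴ / (A⊗B − 1)L⁴ is not 1-dimensional over L. -/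
/-! Put `P = A ⊗ B - 1` and `S = det B • (A ⊗ 1) - 1 ⊗ B`. Cayley–Hamilton for `2 × 2` matrices
gives `P * S = (det B * tr A - tr B) • (A ⊗ B)` as soon as `det A * det B = 1`. If
`det B * tr A ≠ tr B`, then `P * S` is invertible and `P` has full rank. Otherwise `P * S = 0`, so
`rank P + rank S ≤ 4`; but a Kronecker sum `X ⊗ 1 - 1 ⊗ Y` of `2 × 2` matrices has rank at least
`2` unless `X = Y` is scalar, and for `X = det B • A`, `Y = B` that forces `A ⊗ B = 1`. -/

open Kronecker

theorem eq_zero_of_add_eq_add_of_mul_eq_zero {R : Type*} [CommRing R] [NoZeroDivisors R]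
    {a b c d : R} (h : a + d = b + c) (hb : a * b = 0) (hc : a * c = 0) (hd : a * d = 0) :
    a = 0 :=
  mul_self_eq_zero.mp (by linear_combination a * h + hb + hc - hd)

namespace Matrix

section CommRing

variable {R : Type*} [CommRing R]

theorem mul_self_add_det_smul_one_eq_trace_smul (M : Matrix (Fin 2) (Fin 2) R) :
    M * M + M.det • 1 = M.trace • M := by
  ext i j
  fin_cases i <;> fin_cases j <;>
    simp [mul_apply, Fin.sum_univ_two, trace_fin_two, det_fin_two] <;> ring

theorem kronecker_sub_one_mul_smul_kronecker_one_sub_one_kronecker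
    (A B : Matrix (Fin 2) (Fin 2) R) :
    (A ⊗ₖ B - 1) * (B.det • (A ⊗ₖ 1) - 1 ⊗ₖ B) =
      (B.det * A.trace - B.trace) • (A ⊗ₖ B) +
        (1 - A.det * B.det) • ((1 : Matrix (Fin 2) (Fin 2) R) ⊗ₖ B) := by
  have hA : A ⊗ₖ B * A ⊗ₖ 1 + A.det • (1 ⊗ₖ B) = A.trace • (A ⊗ₖ B) := by
    rw [← mul_kronecker_mul, mul_one, ← smul_kronecker, ← add_kronecker,
      mul_self_add_det_smul_one_eq_trace_smul, smul_kronecker]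
  have hB : A ⊗ₖ B * 1 ⊗ₖ B + B.det • (A ⊗ₖ 1) = B.trace • (A ⊗ₖ B) := by
    rw [← mul_kronecker_mul, mul_one, ← kronecker_smul, ← kronecker_add,
      mul_self_add_det_smul_one_eq_trace_smul, kronecker_smul]
  rw [sub_mul, mul_sub, mul_smul_comm, one_mul]
  linear_combination (norm := module) B.det • hA - hB

end CommRing

section Field

variable {K : Type*} [Field K]

theorem mul_sub_mul_eq_zero_of_rank_lt_two {m n : Type*} [Fintype n] {M : Matrix m n K}
    (h : M.rank < 2) (a c : m) (b d : n) : M a b * M c d - M a d * M c b = 0 := by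
  by_contra hne
  have hunit : IsUnit (M.submatrix ![a, c] ![b, d]) := by
    rw [isUnit_iff_isUnit_det, det_fin_two, isUnit_iff_ne_zero]
    simpa using hne
  have := rank_submatrix_le M ![a, c] ![b, d]
  rw [rank_of_isUnit _ hunit, Fintype.card_fin] at this
  omega

theorem exists_eq_smul_one_of_rank_kronecker_one_sub_one_kronecker_lt_two
    {X Y : Matrix (Fin 2) (Fin 2) K} (h : (X ⊗ₖ 1 - 1 ⊗ₖ Y).rank < 2) :
    ∃ c : K, X = c • 1 ∧ Y = c • 1 := by
  set S := X ⊗ₖ 1 - 1 ⊗ₖ Y with hS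
  have minor := mul_sub_mul_eq_zero_of_rank_lt_two h
  have hY10 : Y 1 0 = 0 := by simpa [hS] using minor (0, 1) (1, 1) (0, 0) (1, 0)
  have hY01 : Y 0 1 = 0 := by simpa [hS] using minor (0, 0) (1, 0) (0, 1) (1, 1)
  have hX10 : X 1 0 = 0 := by simpa [hS] using minor (1, 0) (1, 1) (0, 0) (0, 1)
  have hX01 : X 0 1 = 0 := by simpa [hS] using minor (0, 0) (0, 1) (1, 0) (1, 1)
  have hoff : ∀ p q, p ≠ q → S p q = 0 := by
    rintro ⟨i, j⟩ ⟨k, l⟩ hpq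
    fin_cases i <;> fin_cases j <;> fin_cases k <;> fin_cases l <;>
      simp [hS, hX10, hX01, hY10, hY01] at hpq ⊢
  have hdiag : ∀ p q, p ≠ q → S p p * S q q = 0 := fun p q hpq => by
    simpa [hoff p q hpq] using minor p q p q
  have hsum : S (0, 0) (0, 0) + S (1, 1) (1, 1) = S (0, 1) (0, 1) + S (1, 0) (1, 0) := by
    simp [hS]; ring
  have h00 := eq_zero_of_add_eq_add_of_mul_eq_zero hsum (hdiag _ _ (by decide))
    (hdiag _ _ (by decide)) (hdiag _ _ (by decide))
  have h01 := eq_zero_of_add_eq_add_of_mul_eq_zero (d := S (1, 0) (1, 0)) hsum.symm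
    (hdiag _ (0, 0) (by decide)) (hdiag _ (1, 1) (by decide)) (hdiag _ _ (by decide))
  have h10 := eq_zero_of_add_eq_add_of_mul_eq_zero (d := S (0, 1) (0, 1))
    (by rw [add_comm, hsum.symm]) (hdiag _ (0, 0) (by decide)) (hdiag _ (1, 1) (by decide))
    (hdiag _ _ (by decide))
  simp only [hS, sub_apply, kroneckerMap_apply, one_apply_eq, mul_one, one_mul,
    sub_eq_zero] at h00 h01 h10
  refine ⟨X 0 0, ?_, ?_⟩ <;> ext i j <;> fin_cases i <;> fin_cases j <;> simp_all

variable {A B : Matrix (Fin 2) (Fin 2) K}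

theorem rank_kronecker_sub_one_eq_four (h : A.det * B.det = 1)
    (htr : B.det * A.trace ≠ B.trace) : (A ⊗ₖ B - 1).rank = 4 := by
  have hunit : IsUnit ((A ⊗ₖ B - 1) * (B.det • (A ⊗ₖ 1) - 1 ⊗ₖ B)) := by
    rw [kronecker_sub_one_mul_smul_kronecker_one_sub_one_kronecker, h, sub_self, zero_smul,
      add_zero, isUnit_iff_isUnit_det, isUnit_iff_ne_zero, det_smul, det_kronecker]
    simp [← mul_pow, h, sub_ne_zero.mpr htr]
  refine le_antisymm (rank_le_card_width _) ?_
  calc 4 = ((A ⊗ₖ B - 1) * (B.det • (A ⊗ₖ 1) - 1 ⊗ₖ B)).rank := by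
        simp [rank_of_isUnit _ hunit]
    _ ≤ (A ⊗ₖ B - 1).rank := rank_mul_le_left _ _

theorem kronecker_sub_one_eq_zero_or_rank_le_two (h : A.det * B.det = 1)
    (htr : B.det * A.trace = B.trace) : A ⊗ₖ B - 1 = 0 ∨ (A ⊗ₖ B - 1).rank ≤ 2 := by
  have hmul : (A ⊗ₖ B - 1) * ((B.det • A) ⊗ₖ 1 - 1 ⊗ₖ B) = 0 := by
    rw [smul_kronecker, kronecker_sub_one_mul_smul_kronecker_one_sub_one_kronecker, h, htr]
    simp
  have hrank := rank_add_rank_le_card_of_mul_eq_zero hmul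
  rw [Fintype.card_prod, Fintype.card_fin] at hrank
  rcases lt_or_ge ((B.det • A) ⊗ₖ 1 - 1 ⊗ₖ B).rank 2 with hlt | hge
  · left
    obtain ⟨c, hA, hB⟩ := exists_eq_smul_one_of_rank_kronecker_one_sub_one_kronecker_lt_two hlt
    have hdet : B.det ≠ 0 := right_ne_zero_of_mul_eq_one h
    refine smul_right_injective _ hdet (?_ : B.det • (A ⊗ₖ B - 1) = B.det • 0)
    rw [smul_sub, ← smul_kronecker, hA, hB]
    simp [smul_kronecker, kronecker_smul, smul_smul, sq]
  · right
    omega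

end Field

end Matrix

theorem stmt16_general (L : Type) [Field L] (A B : GL (Fin 2) L)
    (h : (A : Matrix (Fin 2) (Fin 2) L).det * (B : Matrix (Fin 2) (Fin 2) L).det = 1) :
    ((A : Matrix (Fin 2) (Fin 2) L) ⊗ₖ (B : Matrix (Fin 2) (Fin 2) L) - 1).rank ≠ 3 := by
  by_cases htr : (B : Matrix (Fin 2) (Fin 2) L).det * (A : Matrix (Fin 2) (Fin 2) L).trace =
      (B : Matrix (Fin 2) (Fin 2) L).trace
  · rcases Matrix.kronecker_sub_one_eq_zero_or_rank_le_two h htr with hzero | hle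
    · simp [hzero]
    · omega
  · simp [Matrix.rank_kronecker_sub_one_eq_four h htr]

/-- Let `L` be a field of characteristic `0` and `A, B ∈ GL₂(L)` with
`det A · det B = 1`. Then the Kronecker product `A ⊗ B ∈ GL₄(L)` satisfies
`rank (A ⊗ B - 1) ≠ 3`; equivalently `L⁴/(A⊗B - 1)L⁴` is not `1`-dimensional. -/
theorem stmt16 (L : Type) [Field L] [CharZero L] (A B : GL (Fin 2) L)
    (h : (A : Matrix (Fin 2) (Fin 2) L).det * (B : Matrix (Fin 2) (Fin 2) L).det = 1) :
    ((A : Matrix (Fin 2) (Fin 2) L) ⊗ₖ (B : Matrix (Fin 2) (Fin 2) L) - 1).rank ≠ 3 :=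
  stmt16_general L A B h
end
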